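/- arXiv:0905.4253 — 2 statements merged into one kernel-verified Lean document; each statement's English description precedes it below -/
import Mathlib

section
/- With η_a(u) = q_{a+1}(u) + (1/2)(-1)^{r-1} q_a(u) + (1/2)δ_{a,0}, for all integers a ≥ 0 one has ∑_{μ=0}^r a_μ(u) η_{μ+a}(u) = 0. -/
open Finset

/-- Generating function `∏ i, (1 + uᵢ t)/(1 - uᵢ t)` in `R[[t]]`, where the factor
`1/(1 - uᵢ t)` is interpreted as the power series `∑ₖ uᵢ^k t^k`. -/
noncomputable def schurQSeries {R : Type*} [CommRing R] {r : ℕ} (u : Fin r → R) :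
    PowerSeries R :=
  ∏ i : Fin r,
    ((1 + PowerSeries.C (u i) * PowerSeries.X) * PowerSeries.mk (fun k => u i ^ k))

/-- The Schur q-function `q_a(u)`: the coefficient of `t^a` in the generating function. -/
noncomputable def schurQ {R : Type*} [CommRing R] {r : ℕ} (u : Fin r → R) (a : ℕ) : R :=
  PowerSeries.coeff a (schurQSeries u)

/-- The signed elementary symmetric function `a_j(u) = (-1)^{r-j} ε_{r-j}(u)`, i.e. the
coefficient of `t^j` in `∏ i, (t - uᵢ)`. -/
noncomputable def signedESymm {R : Type*} [CommRing R] {r : ℕ} (u : Fin r → R) (j : ℕ) : R :=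
  (∏ i : Fin r, (Polynomial.X - Polynomial.C (u i))).coeff j

/-- `η_a(u) = q_{a+1}(u) + (1/2)(-1)^{r-1} q_a(u) + (1/2)δ_{a,0}`. -/
noncomputable def etaSeq {R : Type*} [CommRing R] [Invertible (2 : R)] {r : ℕ}
    (u : Fin r → R) (a : ℕ) : R :=
  schurQ u (a + 1) + ⅟(2 : R) * (-1) ^ (r - 1) * schurQ u a +
    ⅟(2 : R) * (if a = 0 then 1 else 0)

/-
Let `w(t) = ∏ (t - uᵢ) = ∑ a_j t^j`. Its reversal `∏ (1 - uᵢ t) = ∑ a_μ t^(r-μ)` clears the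
denominators of the generating function `∑ q_k t^k = ∏ (1 + uᵢ t)/(1 - uᵢ t)`, leaving the
polynomial `∏ (1 + uᵢ t)` of degree `r` with top coefficient `u₁⋯u_r = (-1)^r a_0`. Comparing
coefficients of `t^(r+b)` gives `∑ a_μ q_(μ+b) = 0` for `b > 0` and `(-1)^r a_0` for `b = 0`.
Summing against `η` therefore leaves only `a = 0`, where the two surviving terms
`(1/2)(-1)^(r-1)(-1)^r a_0` and `(1/2) a_0` cancel because `r > 0`.
-/

open Polynomial

namespace Polynomial

variable {R : Type*}

theorem natDegree_prod_le_card_mul [CommSemiring R] {ι : Type*} {s : Finset ι} {f : ι → R[X]}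
    {n : ℕ} (h : ∀ i ∈ s, (f i).natDegree ≤ n) : (∏ i ∈ s, f i).natDegree ≤ s.card * n :=
  (natDegree_prod_le _ _).trans ((sum_le_sum h).trans_eq (by simp))

theorem reflect_prod [CommSemiring R] {ι : Type*} (s : Finset ι) (f : ι → R[X]) (n : ι → ℕ)
    (h : ∀ i ∈ s, (f i).natDegree ≤ n i) :
    reflect (∑ i ∈ s, n i) (∏ i ∈ s, f i) = ∏ i ∈ s, reflect (n i) (f i) := by
  induction s using Finset.cons_induction with
  | empty => simp
  | cons a s ha ih =>
    rw [forall_mem_cons] at h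
    have hs : (∏ i ∈ s, f i).natDegree ≤ ∑ i ∈ s, n i :=
      (natDegree_prod_le _ _).trans (sum_le_sum h.2)
    rw [sum_cons, prod_cons, prod_cons, reflect_mul _ _ h.1 hs, ih h.2]

theorem reflect_one_X_sub_C [Ring R] (c : R) : reflect 1 (X - C c) = 1 - C c * X := by
  rw [reflect_sub, reflect_one_X, reflect_C, pow_one]

theorem coeff_coe_reflect_mul [CommSemiring R] {n : ℕ} {P : R[X]} (hP : P.natDegree ≤ n)
    (F : PowerSeries R) (b : ℕ) :
    PowerSeries.coeff (n + b) ((reflect n P : PowerSeries R) * F) =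
      ∑ μ ∈ range (n + 1), P.coeff μ * PowerSeries.coeff (μ + b) F := by
  rw [PowerSeries.coeff_mul, Finset.Nat.sum_antidiagonal_eq_sum_range_succ_mk]
  simp only [coeff_coe, coeff_reflect]
  rw [← sum_range_add_sum_Ico _ (by omega : n + 1 ≤ n + b + 1), ← sum_range_reflect]
  have high : ∀ k ∈ Finset.Ico (n + 1) (n + b + 1),
      P.coeff (revAt n k) * PowerSeries.coeff (n + b - k) F = 0 := fun k hk => by
    rw [mem_Ico] at hk
    rw [revAt_eq_self_of_lt (by omega), coeff_eq_zero_of_natDegree_lt (by omega), zero_mul]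
  rw [sum_eq_zero high, add_zero]
  refine sum_congr rfl fun μ hμ => ?_
  rw [mem_range] at hμ
  rw [revAt_le (by omega), show n - (n + 1 - 1 - μ) = μ by omega,
    show n + b - (n + 1 - 1 - μ) = μ + b by omega]

end Polynomial

namespace PowerSeries

theorem one_sub_C_mul_X_mul_mk_pow {R : Type*} [CommRing R] (c : R) :
    (1 - C c * X) * mk (fun k => c ^ k) = 1 := by
  have h := congrArg (rescale c) (mk_one_mul_one_sub_eq_one R)
  simpa [rescale_mk, rescale_X, mul_comm] using h

end PowerSeries

section SchurQ

variable {R : Type*} [CommRing R] {r : ℕ} (u : Fin r → R)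

theorem natDegree_prod_X_sub_C_le : (∏ i : Fin r, (X - C (u i))).natDegree ≤ r := by
  simpa using natDegree_prod_le_card_mul (s := univ) (n := 1)
    (fun i _ => natDegree_X_sub_C_le (u i))

theorem natDegree_prod_one_add_C_mul_X_le : (∏ i : Fin r, (1 + C (u i) * X)).natDegree ≤ r := by
  simpa using natDegree_prod_le_card_mul (s := univ) (f := fun i => 1 + C (u i) * X)
    (n := 1) (fun i _ => by compute_degree)

theorem reflect_prod_X_sub_C :
    reflect r (∏ i : Fin r, (X - C (u i))) = ∏ i : Fin r, (1 - C (u i) * X) := by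
  simpa [reflect_one_X_sub_C] using reflect_prod univ (fun i => X - C (u i)) (fun _ => 1)
    (fun i _ => natDegree_X_sub_C_le (u i))

theorem coeff_prod_one_add_C_mul_X_eq_prod :
    (∏ i : Fin r, (1 + C (u i) * X)).coeff r = ∏ i, u i := by
  have h := coeff_prod_of_natDegree_le (s := univ) (fun i => 1 + C (u i) * X) 1
    (fun i _ => by compute_degree)
  rw [card_univ, Fintype.card_fin, mul_one] at h
  rw [h]
  exact prod_congr rfl fun i _ => by simp [Polynomial.coeff_one]

theorem signedESymm_zero : signedESymm u 0 = (-1) ^ r * ∏ i, u i := by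
  simp [signedESymm, coeff_zero_eq_eval_zero, eval_prod, prod_neg]

theorem coe_prod_one_sub_C_mul_X_mul_schurQSeries :
    ((∏ i : Fin r, (1 - C (u i) * X) : R[X]) : PowerSeries R) * schurQSeries u =
      ((∏ i : Fin r, (1 + C (u i) * X) : R[X]) : PowerSeries R) := by
  simp only [← coeToPowerSeries.ringHom_apply, map_prod, schurQSeries, ← prod_mul_distrib]
  refine prod_congr rfl fun i _ => ?_
  simp only [coeToPowerSeries.ringHom_apply, Polynomial.coe_sub, Polynomial.coe_add,
    Polynomial.coe_one, Polynomial.coe_mul, Polynomial.coe_C, Polynomial.coe_X]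
  rw [mul_left_comm, PowerSeries.one_sub_C_mul_X_mul_mk_pow, mul_one]

theorem sum_signedESymm_mul_schurQ (b : ℕ) :
    ∑ μ ∈ range (r + 1), signedESymm u μ * schurQ u (μ + b) =
      (∏ i : Fin r, (1 + C (u i) * X)).coeff (r + b) := by
  rw [← coeff_coe, ← coe_prod_one_sub_C_mul_X_mul_schurQSeries, ← reflect_prod_X_sub_C,
    coeff_coe_reflect_mul (natDegree_prod_X_sub_C_le u)]
  rfl

theorem sum_signedESymm_mul_schurQ_of_pos {b : ℕ} (hb : 0 < b) :
    ∑ μ ∈ range (r + 1), signedESymm u μ * schurQ u (μ + b) = 0 := by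
  rw [sum_signedESymm_mul_schurQ]
  exact coeff_eq_zero_of_natDegree_lt ((natDegree_prod_one_add_C_mul_X_le u).trans_lt (by omega))

end SchurQ

/-- ∑_{μ=0}^r a_μ(u) η_{μ+a}(u) = 0 for all a ≥ 0. -/
theorem signedESymm_eta_identity {R : Type*} [CommRing R] [Invertible (2 : R)] {r : ℕ}
    (hr : 0 < r) (u : Fin r → R) (a : ℕ) :
    ∑ μ ∈ Finset.range (r + 1), signedESymm u μ * etaSeq u (μ + a) = 0 := by
  have hsplit : ∑ μ ∈ range (r + 1), signedESymm u μ * etaSeq u (μ + a) =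
      ∑ μ ∈ range (r + 1), signedESymm u μ * schurQ u (μ + (a + 1)) +
        ⅟2 * (-1) ^ (r - 1) * ∑ μ ∈ range (r + 1), signedESymm u μ * schurQ u (μ + a) +
        ⅟2 * ∑ μ ∈ range (r + 1), signedESymm u μ * (if μ + a = 0 then 1 else 0) := by
    rw [mul_sum, mul_sum, ← sum_add_distrib, ← sum_add_distrib]
    exact sum_congr rfl fun μ _ => by rw [etaSeq, add_assoc μ a 1]; ring
  rw [hsplit, sum_signedESymm_mul_schurQ_of_pos u a.succ_pos, zero_add]
  rcases a with _ | a
  · obtain ⟨s, rfl⟩ := Nat.exists_eq_add_of_lt hr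
    rw [sum_signedESymm_mul_schurQ, add_zero, coeff_prod_one_add_C_mul_X_eq_prod,
      sum_eq_single 0 (fun μ _ hμ => by simp [hμ]) (by simp), signedESymm_zero]
    simp [pow_succ]
    ring
  · simp [sum_signedESymm_mul_schurQ_of_pos]
end

section
/- Suppose 2 is invertible in a commutative ring R and fix u_1,...,u_r ∈ R with signed elementary symmetric functions a_j(u). Suppose a sequence (ω_a)_{a≥0} in R satisfies: (i) ∑_{μ=0}^{r-j-1} ω_μ a_{μ+j+1}(u) = -2·δ_{(r-j odd)}·a_j(u) + δ_{(j even)}·a_{j+1}(u) for 0 ≤ j ≤ r-1, and (ii) ∑_{μ=0}^r a_μ(u) ω_{μ+a} = 0 for all a ≥ 0. Then ω_a = η_a(u) := q_{a+1}(u) + (1/2)(-1)^{r-1} q_a(u) + (1/2)δ_{a,0} for every a ≥ 0. Conversely, the sequence (η_a(u))_{a≥0} satisfies (i) and (ii). -/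
open Finset

/-!
Put `A(t) = ∏ᵢ (1 - uᵢ t) = ∑_{k ≤ r} a_{r-k}(u) tᵏ` and `Ω(t) = ∑ ω_a tᵃ`. Relation (i) for `j`
prescribes the coefficient of `t^{r-1-j}` in `A Ω`, and relation (ii) for `a` says that the
coefficient of `t^{r+a}` vanishes. So the relations determine `A Ω`, and since `A` has constant
term `1` they have at most one solution. The generating function `Q` of the `q_a` satisfies
`A(t) Q(t) = A(-t)`, and `H = ∑ η_a tᵃ` satisfies `t H = Q - 1 + ½(-1)^{r-1} t Q + ½ t`, so the
coefficients of `A H` are explicit in those of `A`, and they satisfy (i) and (ii).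
-/

namespace Polynomial

variable {R ι : Type*} [CommRing R]

theorem natDegree_prod_X_sub_C_le (s : Finset ι) (f : ι → R) :
    (∏ i ∈ s, (X - C (f i))).natDegree ≤ #s := by
  refine (natDegree_prod_le _ _).trans ?_
  simpa using sum_le_card_nsmul s _ 1 fun i _ => natDegree_X_sub_C_le (f i)

theorem reflect_prod_X_sub_C (s : Finset ι) (f : ι → R) :
    reflect #s (∏ i ∈ s, (X - C (f i))) = ∏ i ∈ s, (1 - C (f i) * X) := by
  induction s using Finset.cons_induction with
  | empty => simp
  | cons a s ha ih =>
    rw [prod_cons, prod_cons, card_cons, add_comm,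
      reflect_mul _ _ (natDegree_X_sub_C_le _) (natDegree_prod_X_sub_C_le s f), ih,
      reflect_sub, reflect_C, ← pow_one X, reflect_monomial]
    simp

end Polynomial

namespace PowerSeries

theorem mk_pow_mul_one_sub_C_mul_X {R : Type*} [CommRing R] (a : R) :
    mk (a ^ ·) * (1 - C a * X) = 1 := by
  simpa [rescale_mk, rescale_X] using congrArg (rescale a) (mk_one_mul_one_sub_eq_one R)

theorem rescale_C {R : Type*} [CommSemiring R] (a c : R) : rescale a (C c) = C c := by
  ext n
  rcases n with _ | n <;> simp [coeff_rescale, coeff_C]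

theorem ext_iff_coeff_sub_one_sub_and_coeff_add {R : Type*} [Semiring R] (r : ℕ)
    {f g : PowerSeries R} :
    f = g ↔ (∀ j < r, coeff (r - 1 - j) f = coeff (r - 1 - j) g) ∧
      ∀ a, coeff (r + a) f = coeff (r + a) g := by
  refine ⟨by rintro rfl; simp, fun ⟨hlow, hhigh⟩ => ext fun n => ?_⟩
  rcases lt_or_ge n r with hn | hn
  · simpa [show r - 1 - (r - 1 - n) = n by omega] using hlow (r - 1 - n) (by omega)
  · simpa [show r + (n - r) = n by omega] using hhigh (n - r)

end PowerSeries

theorem neg_one_pow_sub_one {R : Type*} [Ring R] (m : ℕ) :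
    (-1 : R) ^ m - 1 = -2 * if Odd m then 1 else 0 := by
  rcases Nat.even_or_odd m with hm | hm
  · simp [hm.neg_one_pow, Nat.not_odd_iff_even.mpr hm]
  · norm_num [hm.neg_one_pow, hm]

theorem invOf_two_mul_neg_one_pow_add_one {R : Type*} [Ring R] [Invertible (2 : R)] (m : ℕ) :
    ⅟2 * ((-1 : R) ^ m + 1) = if Even m then 1 else 0 := by
  rcases Nat.even_or_odd m with hm | hm
  · rw [hm.neg_one_pow, if_pos hm, one_add_one_eq_two, invOf_mul_self]
  · simp [hm.neg_one_pow, Nat.not_even_iff_odd.mpr hm]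

open PowerSeries

section

variable {R : Type*} [CommRing R] {r : ℕ} (u : Fin r → R)

noncomputable def schurQDenom : PowerSeries R :=
  ∏ i, (1 - C (u i) * X)

theorem coeff_schurQDenom (n : ℕ) :
    coeff n (schurQDenom u) = if n ≤ r then signedESymm u (r - n) else 0 := by
  have hcoe : schurQDenom u = ((∏ i, (1 - Polynomial.C (u i) * Polynomial.X) : Polynomial R) :
      PowerSeries R) := by
    rw [schurQDenom, ← Polynomial.coeToPowerSeries.ringHom_apply, map_prod]
    simp
  have hrefl := Polynomial.reflect_prod_X_sub_C univ u
  rw [card_univ, Fintype.card_fin] at hrefl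
  rw [hcoe, Polynomial.coeff_coe, ← hrefl, Polynomial.coeff_reflect]
  split_ifs with hn
  · rw [Polynomial.revAt_le hn]; rfl
  · rw [Polynomial.revAt_eq_self_of_lt (by omega)]
    exact Polynomial.coeff_eq_zero_of_natDegree_lt
      ((Polynomial.natDegree_prod_X_sub_C_le _ _).trans_lt (by simpa using hn))

theorem isUnit_schurQDenom : IsUnit (schurQDenom u) := by
  simp [isUnit_iff_constantCoeff, schurQDenom]

theorem schurQDenom_mul_schurQSeries :
    schurQDenom u * schurQSeries u = rescale (-1) (schurQDenom u) := by
  rw [schurQDenom, schurQSeries, ← prod_mul_distrib, map_prod]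
  refine prod_congr rfl fun i _ => ?_
  simp only [map_sub, map_one, map_mul, rescale_C, rescale_neg_one_X]
  linear_combination (1 + C (u i) * X) * mk_pow_mul_one_sub_C_mul_X (u i)

theorem constantCoeff_schurQSeries : constantCoeff (schurQSeries u) = 1 := by
  simp [schurQSeries]

theorem coeff_schurQDenom_mul_mk_sub_one_sub (ω : ℕ → R) {j : ℕ} (hj : j < r) :
    coeff (r - 1 - j) (schurQDenom u * mk ω) =
      ∑ μ ∈ range (r - j), ω μ * signedESymm u (μ + j + 1) := by
  rw [coeff_mul, ← Nat.sum_antidiagonal_swap]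
  simp only [Prod.fst_swap, Prod.snd_swap]
  rw [Nat.sum_antidiagonal_eq_sum_range_succ (fun l k => coeff k (schurQDenom u) * coeff l (mk ω)),
    show (r - 1 - j).succ = r - j by omega]
  refine sum_congr rfl fun μ hμ => ?_
  have hμ : μ < r - j := mem_range.mp hμ
  rw [coeff_schurQDenom, if_pos (by omega), coeff_mk, mul_comm,
    show r - (r - 1 - j - μ) = μ + j + 1 by omega]

theorem coeff_schurQDenom_mul_mk_add (ω : ℕ → R) (a : ℕ) :
    coeff (r + a) (schurQDenom u * mk ω) =
      ∑ μ ∈ range (r + 1), signedESymm u μ * ω (μ + a) := by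
  rw [coeff_mul,
    Nat.sum_antidiagonal_eq_sum_range_succ (fun k l => coeff k (schurQDenom u) * coeff l (mk ω)),
    ← sum_subset (range_subset_range.mpr (by omega : r + 1 ≤ r + a + 1)) fun k _ hk => by
      rw [coeff_schurQDenom, if_neg (by simpa using hk), zero_mul],
    ← sum_range_reflect]
  refine sum_congr rfl fun μ hμ => ?_
  have hμ : μ < r + 1 := mem_range.mp hμ
  rw [coeff_schurQDenom, if_pos (by omega), coeff_mk, show r - (r + 1 - 1 - μ) = μ by omega,
    show r + a - (r + 1 - 1 - μ) = μ + a by omega]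

variable [Invertible (2 : R)]

theorem X_mul_mk_etaSeq : X * PowerSeries.mk (etaSeq u) =
    schurQSeries u - 1 + C (⅟2 * (-1) ^ (r - 1)) * (X * schurQSeries u) + C ⅟2 * X := by
  ext n
  rcases n with _ | n
  · simp [constantCoeff_schurQSeries]
  · simp only [coeff_succ_X_mul, coeff_mk, etaSeq, schurQ, map_add, map_sub, coeff_C_mul,
      coeff_one, coeff_X]
    simp

theorem coeff_schurQDenom_mul_mk_etaSeq (n : ℕ) :
    coeff n (schurQDenom u * PowerSeries.mk (etaSeq u)) =
      ((-1) ^ (n + 1) - 1) * coeff (n + 1) (schurQDenom u) +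
        ⅟2 * ((-1) ^ (r - 1 + n) + 1) * coeff n (schurQDenom u) := by
  have h : X * (schurQDenom u * PowerSeries.mk (etaSeq u)) =
      rescale (-1) (schurQDenom u) - schurQDenom u +
        C (⅟2 * (-1) ^ (r - 1)) * (X * rescale (-1) (schurQDenom u)) +
        C ⅟2 * (X * schurQDenom u) := by
    rw [mul_left_comm, X_mul_mk_etaSeq]
    linear_combination (1 + C (⅟2 * (-1) ^ (r - 1)) * X) * schurQDenom_mul_schurQSeries u
  rw [← coeff_succ_X_mul, h]
  simp only [map_add, map_sub, coeff_C_mul, coeff_succ_X_mul, coeff_rescale, pow_add]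
  ring

theorem coeff_schurQDenom_mul_mk_etaSeq_sub_one_sub {j : ℕ} (hj : j < r) :
    coeff (r - 1 - j) (schurQDenom u * PowerSeries.mk (etaSeq u)) =
      -2 * (if Odd (r - j) then (1 : R) else 0) * signedESymm u j +
        (if Even j then (1 : R) else 0) * signedESymm u (j + 1) := by
  have hsign : (-1 : R) ^ (r - 1 + (r - 1 - j)) = (-1) ^ j := by
    rw [show r - 1 + (r - 1 - j) = j + 2 * (r - 1 - j) by omega, pow_add, pow_mul, neg_one_sq,
      one_pow, mul_one]
  rw [coeff_schurQDenom_mul_mk_etaSeq, show r - 1 - j + 1 = r - j by omega, hsign,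
    neg_one_pow_sub_one, invOf_two_mul_neg_one_pow_add_one, coeff_schurQDenom,
    coeff_schurQDenom, if_pos (show r - j ≤ r by omega), if_pos (show r - 1 - j ≤ r by omega),
    show r - (r - j) = j by omega, show r - (r - 1 - j) = j + 1 by omega]

theorem coeff_schurQDenom_mul_mk_etaSeq_add (hr : 0 < r) (a : ℕ) :
    coeff (r + a) (schurQDenom u * PowerSeries.mk (etaSeq u)) = 0 := by
  rw [coeff_schurQDenom_mul_mk_etaSeq, coeff_schurQDenom, if_neg (by omega), mul_zero, zero_add]
  rcases a with _ | a
  · rw [show r - 1 + (r + 0) = 2 * (r - 1) + 1 by omega, pow_succ, pow_mul, neg_one_sq, one_pow]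
    simp
  · rw [coeff_schurQDenom, if_neg (by omega), mul_zero]

end

/-- a sequence (ω_a) satisfies the admissibility relations (i) and (ii) if and
only if ω_a = η_a(u) for all a ≥ 0. -/
theorem admissible_iff_u_admissible {R : Type*} [CommRing R] [Invertible (2 : R)] {r : ℕ}
    (hr : 0 < r) (u : Fin r → R) (ω : ℕ → R) :
    ((∀ j < r, ∑ μ ∈ Finset.range (r - j), ω μ * signedESymm u (μ + j + 1) =
        -2 * (if Odd (r - j) then (1 : R) else 0) * signedESymm u j +
          (if Even j then (1 : R) else 0) * signedESymm u (j + 1)) ∧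
     (∀ a : ℕ, ∑ μ ∈ Finset.range (r + 1), signedESymm u μ * ω (μ + a) = 0)) ↔
    (∀ a : ℕ, ω a = etaSeq u a) := by
  set A := schurQDenom u
  calc _ ↔ (∀ j < r, coeff (r - 1 - j) (A * mk ω) = coeff (r - 1 - j) (A * mk (etaSeq u))) ∧
        ∀ a, coeff (r + a) (A * mk ω) = coeff (r + a) (A * mk (etaSeq u)) := by
        refine and_congr (forall₂_congr fun j hj => ?_) (forall_congr' fun a => ?_)
        · rw [coeff_schurQDenom_mul_mk_sub_one_sub u ω hj,
            coeff_schurQDenom_mul_mk_etaSeq_sub_one_sub u hj]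
        · rw [coeff_schurQDenom_mul_mk_add, coeff_schurQDenom_mul_mk_etaSeq_add u hr]
    _ ↔ A * mk ω = A * mk (etaSeq u) := (ext_iff_coeff_sub_one_sub_and_coeff_add r).symm
    _ ↔ mk ω = mk (etaSeq u) := (isUnit_schurQDenom u).mul_right_inj
    _ ↔ ∀ a, ω a = etaSeq u a := by simp [PowerSeries.ext_iff]
end
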